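/- Let Γ be the random bipartite graph. Suppose h ∈ F(S_{l,r}(Γ)), U is a finite bipartite subgraph of dom(h) on which h restricts to the identity, and v ∈ dom(h) \ U. Then h↾(U ∪ {v}) is either an isomorphism (preserves the cross-type of every cross-edge of U ∪ {v}) or a switch with respect to v. -/

import Mathlib

/-! Preamble: bipartite graphs, the random bipartite graph, side-preserving
permutation groups, switches, switch groups, and related notions. -/

/-- A bipartite graph on a vertex type `V`: the sides `left` and `right`
partition `V`, both sides are nonempty, and `adj` (the relation `P₁`) only holds
from `left` to `right`.  The relation `P₂` is the complement of `adj` on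
`left × right`. -/
structure BipartiteGraph (V : Type*) where
  left : Set V
  right : Set V
  adj : V → V → Prop
  left_nonempty : left.Nonempty
  right_nonempty : right.Nonempty
  union_eq : left ∪ right = Set.univ
  disjoint_sides : Disjoint left right
  adj_dom : ∀ a b, adj a b → a ∈ left ∧ b ∈ right

/-- The two sides of a bipartite graph. -/
inductive BSide : Type
  | l : BSide
  | r : BSide
deriving DecidableEq

namespace BipartiteGraph

variable {V : Type*} (Γ : BipartiteGraph V)

/-- The side of the graph indexed by an element of `BSide`. -/
def side : BSide → Set V
  | BSide.l => Γ.left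
  | BSide.r => Γ.right

/-- `Γ` is (isomorphic to) the random bipartite graph: it is countable, both
sides are infinite, and it satisfies the extension properties `Θₙ` for all `n`. -/
structure IsRandom : Prop where
  countable : Countable V
  left_infinite : Γ.left.Infinite
  right_infinite : Γ.right.Infinite
  ext_left : ∀ X₁ X₂ : Finset V, ↑X₁ ⊆ Γ.left → ↑X₂ ⊆ Γ.left → Disjoint X₁ X₂ →
      ∃ v ∈ Γ.right, (∀ x ∈ X₁, Γ.adj x v) ∧ (∀ x ∈ X₂, ¬ Γ.adj x v)
  ext_right : ∀ X₁ X₂ : Finset V, ↑X₁ ⊆ Γ.right → ↑X₂ ⊆ Γ.right → Disjoint X₁ X₂ →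
      ∃ v ∈ Γ.left, (∀ x ∈ X₁, Γ.adj v x) ∧ (∀ x ∈ X₂, ¬ Γ.adj v x)

/-- `Sym_{l,r}(Γ)`: the group of permutations of `V` preserving both sides. -/
def symLR : Subgroup (Equiv.Perm V) where
  carrier := {g | (∀ v, g v ∈ Γ.left ↔ v ∈ Γ.left) ∧ (∀ v, g v ∈ Γ.right ↔ v ∈ Γ.right)}
  one_mem' := ⟨fun _ => Iff.rfl, fun _ => Iff.rfl⟩
  mul_mem' := by
    rintro a b ⟨hal, har⟩ ⟨hbl, hbr⟩
    exact ⟨fun v => (hal (b v)).trans (hbl v), fun v => (har (b v)).trans (hbr v)⟩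
  inv_mem' := by
    rintro a ⟨hal, har⟩
    refine ⟨fun v => ?_, fun v => ?_⟩
    · have h := hal (a⁻¹ v); rw [show ∀ w, a (a⁻¹ w) = w from a.apply_symm_apply] at h; exact h.symm
    · have h := har (a⁻¹ v); rw [show ∀ w, a (a⁻¹ w) = w from a.apply_symm_apply] at h; exact h.symm

/-- The automorphism group of `Γ`: side-preserving permutations preserving `adj`
(and hence both cross-types). -/
def autGroup : Subgroup (Equiv.Perm V) where
  carrier := {g | g ∈ Γ.symLR ∧ ∀ a b, Γ.adj a b ↔ Γ.adj (g a) (g b)}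
  one_mem' := ⟨Γ.symLR.one_mem, fun _ _ => Iff.rfl⟩
  mul_mem' := by
    rintro a b ⟨ha, ha2⟩ ⟨hb, hb2⟩
    exact ⟨mul_mem ha hb, fun x y => (hb2 x y).trans (ha2 (b x) (b y))⟩
  inv_mem' := by
    rintro a ⟨ha, ha2⟩
    refine ⟨inv_mem ha, fun x y => ?_⟩
    have h := ha2 (a⁻¹ x) (a⁻¹ y)
    rw [show ∀ w, a (a⁻¹ w) = w from a.apply_symm_apply, show ∀ w, a (a⁻¹ w) = w from a.apply_symm_apply] at h
    exact h.symm

/-- A permutation `g` is a switch with respect to a set `A` if it preserves the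
sides and, for every cross-edge `(a, b)`, the cross-type of `(a, b)` is preserved
if and only if `|{a, b} ∩ A| ≠ 1`. -/
def IsSwitch (g : Equiv.Perm V) (A : Set V) : Prop :=
  g ∈ Γ.symLR ∧ ∀ a ∈ Γ.left, ∀ b ∈ Γ.right,
    ((Γ.adj a b ↔ Γ.adj (g a) (g b)) ↔ ({a, b} ∩ A : Set V).ncard ≠ 1)

/-- The restriction of a map `g` to a set `S` is a switch with respect to `A`:
the condition of `IsSwitch` holds for all cross-edges inside `S`. -/
def IsSwitchOn (g : V → V) (S : Set V) (A : Set V) : Prop :=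
  ∀ a ∈ S ∩ Γ.left, ∀ b ∈ S ∩ Γ.right,
    ((Γ.adj a b ↔ Γ.adj (g a) (g b)) ↔ ({a, b} ∩ A : Set V).ncard ≠ 1)

/-- The restriction of a map `g` to a set `S` is an isomorphism: `g` preserves
the cross-type of every cross-edge inside `S`. -/
def IsIsoOn (g : V → V) (S : Set V) : Prop :=
  ∀ a ∈ S ∩ Γ.left, ∀ b ∈ S ∩ Γ.right, (Γ.adj a b ↔ Γ.adj (g a) (g b))

end BipartiteGraph

/-- A subgroup of the full symmetric group is closed (in the topology of
pointwise convergence) iff it contains every permutation which agrees with some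
member of the subgroup on each finite subset. -/
def IsClosedSubgroup {V : Type*} (G : Subgroup (Equiv.Perm V)) : Prop :=
  ∀ g : Equiv.Perm V, (∀ F : Finset V, ∃ h ∈ G, ∀ x ∈ F, h x = g x) → g ∈ G

/-- The closed subgroup generated by a set of permutations: the intersection of
all closed subgroups containing the set. -/
def closedClosure {V : Type*} (S : Set (Equiv.Perm V)) : Subgroup (Equiv.Perm V) :=
  sInf {G : Subgroup (Equiv.Perm V) | IsClosedSubgroup G ∧ S ⊆ ↑G}

namespace BipartiteGraph

variable {V : Type*} (Γ : BipartiteGraph V)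

/-- The switch group `S_X(Γ)`: the closed subgroup of `Sym_{l,r}(Γ)` generated
by `Aut(Γ)` together with all switches with respect to a single vertex `v ∈ R_i`
for `i ∈ X`. -/
def switchGroup (X : Set BSide) : Subgroup (Equiv.Perm V) :=
  closedClosure ((Γ.autGroup : Set (Equiv.Perm V)) ∪
    {g | ∃ i ∈ X, ∃ v ∈ Γ.side i, Γ.IsSwitch g {v}})

/-- The group `S_X(Γ)* `: the closed subgroup generated by `S_X(Γ)` together with
a switch `ρ` with respect to the whole side `R_l`. -/
def switchGroupStar (X : Set BSide) : Subgroup (Equiv.Perm V) :=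
  closedClosure ((Γ.switchGroup X : Set (Equiv.Perm V)) ∪ {g | Γ.IsSwitch g Γ.left})

/-- Membership in `Aut(Γ)*`, the group of side-preserving permutations which
either preserve all cross-types on `R_l × R_r` or exchange all cross-types on
`R_l × R_r`. -/
def InAutStar (g : Equiv.Perm V) : Prop :=
  g ∈ Γ.symLR ∧
    ((∀ a ∈ Γ.left, ∀ b ∈ Γ.right, (Γ.adj a b ↔ Γ.adj (g a) (g b))) ∨
     (∀ a ∈ Γ.left, ∀ b ∈ Γ.right, (Γ.adj a b ↔ ¬ Γ.adj (g a) (g b))))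

/-- The number of cross-edges of cross-type `P₁` inside the set `S`. -/
noncomputable def edgeCount (S : Set V) : ℕ :=
  {p : V × V | p.1 ∈ S ∧ p.2 ∈ S ∧ Γ.adj p.1 p.2}.ncard

/-- `g` preserves the parity of cross-types on `S`: the number of `P₁`
cross-edges in `S` is even iff the number of `P₁` cross-edges in `g[S]` is even. -/
def PreservesParityOn (g : V → V) (S : Set V) : Prop :=
  Even (Γ.edgeCount S) ↔ Even (Γ.edgeCount (g '' S))

/-- An `(m × n)`-subgraph of `Γ`: a finite set of vertices with `m` vertices on
the left side and `n` vertices on the right side. -/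
def IsMNSubgraph (S : Set V) (m n : ℕ) : Prop :=
  S.Finite ∧ (S ∩ Γ.left).ncard = m ∧ (S ∩ Γ.right).ncard = n

end BipartiteGraph

/-! Say that `g` flips `(a, b)` if it changes the cross-type of `(a, b)`. An automorphism
flips nothing and a switch with respect to `w` flips exactly the cross-edges at `w`, so in both
cases every square `a, a' ∈ R_l`, `b, b' ∈ R_r` has an even number of flipped cross-edges. This
property survives products, inverses and pointwise limits, so every member of `S_{l,r}(Γ)` has
it. It says that the flips of `g` are given by `p a xor p b` for a potential `p`, which can be
normalised to vanish on `U` when `g` fixes `U` pointwise. On `U ∪ {v}` the potential is then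
either zero, and `g` is an isomorphism there, or the indicator of `v`, and `g` is a switch with
respect to `v`. -/

namespace BipartiteGraph

variable {V : Type*} (Γ : BipartiteGraph V)

def Flips (g : V → V) (a b : V) : Prop :=
  ¬(Γ.adj a b ↔ Γ.adj (g a) (g b))

def FlipsEvenlyOnSquares (g : V → V) : Prop :=
  ∀ a ∈ Γ.left, ∀ a' ∈ Γ.left, ∀ b ∈ Γ.right, ∀ b' ∈ Γ.right,
    ((Γ.Flips g a b ↔ Γ.Flips g a b') ↔ (Γ.Flips g a' b ↔ Γ.Flips g a' b'))

lemma mem_left_or_mem_right (x : V) : x ∈ Γ.left ∨ x ∈ Γ.right := by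
  rw [← Set.mem_union, Γ.union_eq]; trivial

variable {Γ}

lemma notMem_left_of_mem_right {x : V} (hx : x ∈ Γ.right) : x ∉ Γ.left :=
  Set.disjoint_right.mp Γ.disjoint_sides hx

lemma flips_congr {g k : V → V} {a b : V} (ha : g a = k a) (hb : g b = k b) :
    Γ.Flips g a b ↔ Γ.Flips k a b := by
  rw [Flips, Flips, ha, hb]

lemma not_flips_of_fixed {g : V → V} {a b : V} (ha : g a = a) (hb : g b = b) :
    ¬Γ.Flips g a b := by
  simp [Flips, ha, hb]

lemma flips_mul (x y : Equiv.Perm V) (a b : V) :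
    Γ.Flips (⇑(x * y)) a b ↔ ¬(Γ.Flips y a b ↔ Γ.Flips x (y a) (y b)) := by
  simp only [Flips, Equiv.Perm.mul_apply]
  tauto

lemma flips_inv (x : Equiv.Perm V) (a b : V) :
    Γ.Flips (⇑x⁻¹) a b ↔ Γ.Flips x (x⁻¹ a) (x⁻¹ b) := by
  simp only [Flips, Equiv.Perm.coe_inv, Equiv.apply_symm_apply]
  tauto

lemma ncard_pair_inter_singleton_ne_one_iff {a b v : V} (hab : a ≠ b) :
    ({a, b} ∩ {v} : Set V).ncard ≠ 1 ↔ (a = v ↔ b = v) := by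
  by_cases hv : v ∈ ({a, b} : Set V)
  · rw [Set.inter_singleton_of_mem hv, Set.ncard_singleton]
    grind
  · rw [Set.inter_singleton_eq_empty.2 hv, Set.ncard_empty]
    grind

lemma switch_condition_singleton_iff {g : V → V} {a b v : V} (ha : a ∈ Γ.left)
    (hb : b ∈ Γ.right) :
    ((Γ.adj a b ↔ Γ.adj (g a) (g b)) ↔ ({a, b} ∩ {v} : Set V).ncard ≠ 1) ↔
      (Γ.Flips g a b ↔ ¬(a = v ↔ b = v)) := by
  have hab : a ≠ b := by rintro rfl; exact notMem_left_of_mem_right hb ha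
  rw [ncard_pair_inter_singleton_ne_one_iff hab, Flips]
  tauto

lemma flips_iff_ne_of_isSwitch {g : Equiv.Perm V} {w : V} (hg : Γ.IsSwitch g {w}) {a b : V}
    (ha : a ∈ Γ.left) (hb : b ∈ Γ.right) : Γ.Flips g a b ↔ ¬(a = w ↔ b = w) :=
  (switch_condition_singleton_iff ha hb).1 (hg.2 a ha b hb)

variable (Γ)

def squareEvenGroup : Subgroup (Equiv.Perm V) where
  carrier := {g | g ∈ Γ.symLR ∧ Γ.FlipsEvenlyOnSquares g}
  one_mem' := ⟨Γ.symLR.one_mem, fun _ _ _ _ _ _ _ _ => by simp [Flips]⟩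
  mul_mem' := by
    rintro x y ⟨hx, hx_even⟩ ⟨hy, hy_even⟩
    refine ⟨mul_mem hx hy, fun a ha a' ha' b hb b' hb' => ?_⟩
    have hy_sq := hy_even a ha a' ha' b hb b' hb'
    have hx_sq := hx_even (y a) ((hy.1 a).2 ha) (y a') ((hy.1 a').2 ha')
      (y b) ((hy.2 b).2 hb) (y b') ((hy.2 b').2 hb')
    simp only [flips_mul]
    grind
  inv_mem' := by
    rintro x ⟨hx, hx_even⟩
    have hxi : x⁻¹ ∈ Γ.symLR := inv_mem hx
    refine ⟨hxi, fun a ha a' ha' b hb b' hb' => ?_⟩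
    simp only [flips_inv]
    exact hx_even (x⁻¹ a) ((hxi.1 a).2 ha) (x⁻¹ a') ((hxi.1 a').2 ha')
      (x⁻¹ b) ((hxi.2 b).2 hb) (x⁻¹ b') ((hxi.2 b').2 hb')

lemma isClosedSubgroup_squareEvenGroup : IsClosedSubgroup Γ.squareEvenGroup := by
  classical
  intro g hg
  refine ⟨⟨fun w => ?_, fun w => ?_⟩, fun a ha a' ha' b hb b' hb' => ?_⟩
  · obtain ⟨k, hk, hkg⟩ := hg {w}
    rw [← hkg w (Finset.mem_singleton_self w)]
    exact hk.1.1 w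
  · obtain ⟨k, hk, hkg⟩ := hg {w}
    rw [← hkg w (Finset.mem_singleton_self w)]
    exact hk.1.2 w
  · obtain ⟨k, hk, hkg⟩ := hg {a, a', b, b'}
    have hflips : ∀ p ∈ ({a, a', b, b'} : Finset V), ∀ q ∈ ({a, a', b, b'} : Finset V),
        Γ.Flips k p q ↔ Γ.Flips g p q :=
      fun p hp q hq => flips_congr (hkg p hp) (hkg q hq)
    rw [← hflips a (by simp) b (by simp), ← hflips a (by simp) b' (by simp),
      ← hflips a' (by simp) b (by simp), ← hflips a' (by simp) b' (by simp)]
    exact hk.2 a ha a' ha' b hb b' hb'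

lemma autGroup_le_squareEvenGroup : Γ.autGroup ≤ Γ.squareEvenGroup :=
  fun _ ⟨hg, hadj⟩ => ⟨hg, fun a _ a' _ b _ b' _ => by simp [Flips, ← hadj]⟩

lemma switchGroup_le_squareEvenGroup (X : Set BSide) : Γ.switchGroup X ≤ Γ.squareEvenGroup := by
  refine sInf_le ⟨Γ.isClosedSubgroup_squareEvenGroup,
    Set.union_subset Γ.autGroup_le_squareEvenGroup ?_⟩
  rintro g ⟨-, -, w, -, hg⟩
  refine ⟨hg.1, fun a ha a' ha' b hb b' hb' => ?_⟩
  rw [flips_iff_ne_of_isSwitch hg ha hb, flips_iff_ne_of_isSwitch hg ha hb',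
    flips_iff_ne_of_isSwitch hg ha' hb, flips_iff_ne_of_isSwitch hg ha' hb']
  tauto

variable {Γ}

lemma exists_flips_iff_xor {g : V → V} (hg : Γ.FlipsEvenlyOnSquares g) {ul ur : V}
    (hul : ul ∈ Γ.left) (hur : ur ∈ Γ.right) (h_ulur : ¬Γ.Flips g ul ur) :
    ∃ p : V → Prop, (∀ a ∈ Γ.left, p a ↔ Γ.Flips g a ur) ∧
      (∀ b ∈ Γ.right, p b ↔ Γ.Flips g ul b) ∧
      ∀ a ∈ Γ.left, ∀ b ∈ Γ.right, Γ.Flips g a b ↔ ¬(p a ↔ p b) := by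
  classical
  refine ⟨fun x => if x ∈ Γ.left then Γ.Flips g x ur else Γ.Flips g ul x,
    fun a ha => by simp [ha], fun b hb => by simp [notMem_left_of_mem_right hb],
    fun a ha b hb => ?_⟩
  have h_sq := hg a ha ul hul b hb ur hur
  simp only [ha, notMem_left_of_mem_right hb, if_true, if_false]
  grind

lemma isIsoOn_or_isSwitchOn_of_flips_iff_xor {g : V → V} {S : Set V} {v : V} {p : V → Prop}
    (hflips : ∀ a ∈ S ∩ Γ.left, ∀ b ∈ S ∩ Γ.right, Γ.Flips g a b ↔ ¬(p a ↔ p b))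
    (hp : ∀ x ∈ S, x ≠ v → ¬p x) :
    Γ.IsIsoOn g S ∨ Γ.IsSwitchOn g S {v} := by
  by_cases hpv : p v
  · right
    have hpS : ∀ x ∈ S, p x ↔ x = v :=
      fun x hx => ⟨fun hpx => by_contra (hp x hx · hpx), fun hxv => hxv ▸ hpv⟩
    intro a ha b hb
    rw [switch_condition_singleton_iff ha.2 hb.2, hflips a ha b hb, hpS a ha.1, hpS b hb.1]
  · left
    have hpS : ∀ x ∈ S, ¬p x := fun x hx hpx => by
      obtain rfl : x = v := by_contra (hp x hx · hpx)
      exact hpv hpx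
    intro a ha b hb
    exact not_not.1 ((hflips a ha b hb).not.2
      (not_not_intro (iff_of_false (hpS a ha.1) (hpS b hb.1))))

end BipartiteGraph

theorem isIsoOn_or_isSwitchOn_of_id_on_general {V : Type*} (Γ : BipartiteGraph V)
    (h : Equiv.Perm V) (hmem : h ∈ Γ.switchGroup {BSide.l, BSide.r})
    (U : Finset V)
    (hUl : ((U : Set V) ∩ Γ.left).Nonempty) (hUr : ((U : Set V) ∩ Γ.right).Nonempty)
    (hid : ∀ x ∈ U, h x = x) (v : V) :
    Γ.IsIsoOn (⇑h) ((U : Set V) ∪ {v}) ∨ Γ.IsSwitchOn (⇑h) ((U : Set V) ∪ {v}) {v} := by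
  obtain ⟨ul, hulU, hul⟩ := hUl
  obtain ⟨ur, hurU, hur⟩ := hUr
  have hfixed : ∀ x ∈ U, ∀ y ∈ U, ¬Γ.Flips h x y :=
    fun x hx y hy => BipartiteGraph.not_flips_of_fixed (hid x hx) (hid y hy)
  obtain ⟨p, hpl, hpr, hflips⟩ := BipartiteGraph.exists_flips_iff_xor
    (Γ.switchGroup_le_squareEvenGroup _ hmem).2 hul hur (hfixed ul hulU ur hurU)
  refine BipartiteGraph.isIsoOn_or_isSwitchOn_of_flips_iff_xor
    (fun a ha b hb => hflips a ha.2 b hb.2) ?_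
  rintro x (hxU | rfl) hxv
  · rcases Γ.mem_left_or_mem_right x with hxl | hxr
    · exact (hpl x hxl).not.2 (hfixed x hxU ur hurU)
    · exact (hpr x hxr).not.2 (hfixed ul hulU x hxU)
  · exact absurd rfl hxv

/-- (From the proof of Claim C, Theorem 5.1.) Suppose `h ∈ F(S_{l,r}(Γ))` (here
represented by a member `h` of `S_{l,r}(Γ)`), `U` is a finite bipartite subgraph
on which `h` restricts to the identity, and `v ∉ U`.  Then `h ↾ (U ∪ {v})` is
either an isomorphism or a switch with respect to `v`. -/
theorem isIsoOn_or_isSwitchOn_of_id_on {V : Type*} (Γ : BipartiteGraph V)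
    (hΓ : Γ.IsRandom) (h : Equiv.Perm V) (hmem : h ∈ Γ.switchGroup {BSide.l, BSide.r})
    (U : Finset V)
    (hUl : ((U : Set V) ∩ Γ.left).Nonempty) (hUr : ((U : Set V) ∩ Γ.right).Nonempty)
    (hid : ∀ x ∈ U, h x = x) (v : V) (hv : v ∉ U) :
    Γ.IsIsoOn (⇑h) ((U : Set V) ∪ {v}) ∨ Γ.IsSwitchOn (⇑h) ((U : Set V) ∪ {v}) {v} :=
  isIsoOn_or_isSwitchOn_of_id_on_general Γ h hmem U hUl hUr hid v
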